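/- The formal power series M(x) = Σ_{n≥0} M_n·x^n of Motzkin numbers satisfies M(x) = 1 + x·M(x) + x²·M(x)². -/
import Mathlib


inductive MStep where
  | U : MStep
  | D : MStep
  | H : MStep
deriving DecidableEq

/-- A word in {U,D,H} is a Motzkin path if #U = #D and no prefix has more D's than U's. -/
def IsMotzkin (w : List MStep) : Prop :=
  w.count MStep.U = w.count MStep.D ∧
  ∀ p : List MStep, p <+: w → p.count MStep.D ≤ p.count MStep.U

/-- Number of Motzkin paths of length n (the n-th Motzkin number). -/
noncomputable def motzkinNum (n : ℕ) : ℕ :=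
  Nat.card {w : List MStep // w.length = n ∧ IsMotzkin w}

/-- Number of Motzkin paths of length n with an even number of U steps. -/
noncomputable def evenMotzkin (n : ℕ) : ℕ :=
  Nat.card {w : List MStep // w.length = n ∧ IsMotzkin w ∧ Even (w.count MStep.U)}

/-- Number of Motzkin paths of length n with an odd number of U steps. -/
noncomputable def oddMotzkin (n : ℕ) : ℕ :=
  Nat.card {w : List MStep // w.length = n ∧ IsMotzkin w ∧ Odd (w.count MStep.U)}

/-- The shadow of the n-th Motzkin number: s(n) = a(n) - b(n). -/
noncomputable def shadow (n : ℕ) : ℤ :=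
  (evenMotzkin n : ℤ) - (oddMotzkin n : ℤ)

open MStep

instance : Fintype MStep :=
  ⟨{MStep.U, MStep.D, MStep.H}, by intro x; cases x <;> simp⟩

abbrev MW (n : ℕ) := {w : List MStep // w.length = n ∧ IsMotzkin w}

instance MW.finite (n : ℕ) : Finite (MW n) := by
  have : Finite {l : List MStep // l.length = n} :=
    inferInstanceAs (Finite (List.Vector MStep n))
  exact Finite.of_injective
    (fun w : MW n => (⟨w.1, w.2.1⟩ : {l : List MStep // l.length = n}))
    (fun a b h => Subtype.ext (by simpa using congrArg Subtype.val h))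

lemma prefix_append_cases {α : Type*} {q a b : List α} (h : q <+: a ++ b) :
    q <+: a ∨ ∃ r, r <+: b ∧ q = a ++ r := by
  rcases le_or_gt q.length a.length with hle | hlt
  · exact Or.inl (List.prefix_of_prefix_length_le h (a.prefix_append b) hle)
  · right
    have ha : a <+: q := List.prefix_of_prefix_length_le (a.prefix_append b) h hlt.le
    obtain ⟨r, rfl⟩ := ha
    exact ⟨r, (List.prefix_append_right_inj a).mp h, rfl⟩

lemma motz_H {w : List MStep} (h : IsMotzkin w) : IsMotzkin (H :: w) := by
  constructor
  · simpa using h.1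
  · intro p hp
    rcases List.prefix_cons_iff.mp hp with rfl | ⟨q, rfl, hq⟩
    · simp
    · have := h.2 q hq
      simpa using this

lemma motz_UD {w1 w2 : List MStep} (h1 : IsMotzkin w1) (h2 : IsMotzkin w2) :
    IsMotzkin (U :: (w1 ++ D :: w2)) := by
  have e1 := h1.1
  have e2 := h2.1
  constructor
  · simp [List.count_append, List.count_cons]
    omega
  · intro p hp
    rcases List.prefix_cons_iff.mp hp with rfl | ⟨q, rfl, hq⟩
    · simp
    · rcases prefix_append_cases hq with hq1 | ⟨r, hr, rfl⟩
      · have := h1.2 q hq1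
        simp [List.count_cons]
        omega
      · rcases List.prefix_cons_iff.mp hr with rfl | ⟨s, rfl, hs⟩
        · simp [List.count_append, List.count_cons]
          omega
        · have := h2.2 s hs
          simp [List.count_append, List.count_cons]
          omega


lemma not_len_lt {w1 w2 w1' w2' : List MStep} (h1 : IsMotzkin w1) (h1' : IsMotzkin w1')
    (he : w1 ++ D :: w2 = w1' ++ D :: w2') : ¬ w1.length < w1'.length := by
  intro hlt
  have hp : w1 ++ [D] <+: w1' := by
    have h3 : w1 ++ [D] <+: w1' ++ D :: w2' := by
      rw [← he]
      refine ⟨w2, by simp⟩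
    exact List.prefix_of_prefix_length_le h3 (w1'.prefix_append _) (by simpa using hlt)
  have hb := h1'.2 _ hp
  have he1 := h1.1
  simp [List.count_append, List.count_cons] at hb
  omega

lemma uniq_UD {w1 w2 w1' w2' : List MStep} (h1 : IsMotzkin w1) (h1' : IsMotzkin w1')
    (he : w1 ++ D :: w2 = w1' ++ D :: w2') : w1 = w1' ∧ w2 = w2' := by
  have hlen : w1.length = w1'.length := by
    rcases lt_trichotomy w1.length w1'.length with h | h | h
    · exact absurd h (not_len_lt h1 h1' he)
    · exact h
    · exact absurd h (not_len_lt h1' h1 he.symm)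
  obtain ⟨e1, e2⟩ := List.append_inj he hlen
  exact ⟨e1, by simpa using e2⟩

/-- First-return decomposition of the tail of a Motzkin word starting with U. -/
lemma decomp {t : List MStep}
    (hbd : ∀ p, p <+: t → p.count D ≤ p.count U + 1)
    (hend : t.count D = t.count U + 1) :
    ∃ w1 w2 : List MStep, t = w1 ++ D :: w2 ∧ IsMotzkin w1 ∧ IsMotzkin w2 := by
  have hex : ∃ m, ((t.take m).count D = (t.take m).count U + 1) :=
    ⟨t.length, by simpa using hend⟩
  classical
  set m := Nat.find hex with hm
  have hP : (t.take m).count D = (t.take m).count U + 1 := Nat.find_spec hex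
  have hmin : ∀ m' < m, ¬ ((t.take m').count D = (t.take m').count U + 1) :=
    fun m' h => Nat.find_min hex h
  have hsmall : ∀ r : List MStep, r <+: t → r.length < m → r.count D ≤ r.count U := by
    intro r hr hlen
    have h1 := hbd r hr
    have h2 := hmin r.length hlen
    rw [← List.prefix_iff_eq_take.mp hr] at h2
    omega
  have hm1 : 1 ≤ m := by
    by_contra h
    push_neg at h
    interval_cases m
    simp at hP
  have hmle : m ≤ t.length := Nat.find_le (by simpa using hend)
  set p := t.take m with hpdef
  have hplen : p.length = m := by
    rw [hpdef, List.length_take]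
    omega
  have hpne : p ≠ [] := by
    intro h
    rw [h] at hplen
    simp at hplen
    omega
  obtain ⟨q, x, hplast⟩ : ∃ q x, p = q ++ [x] :=
    ⟨p.dropLast, p.getLast hpne, (List.dropLast_append_getLast hpne).symm⟩
  have hqpre : q <+: t := by
    have hqp : q <+: p := ⟨[x], hplast.symm⟩
    exact hqp.trans (List.take_prefix m t)
  have hqlen : q.length < m := by
    have hdl : p.length = q.length + 1 := by rw [hplast]; simp
    omega
  have hqD : q.count D ≤ q.count U := hsmall q hqpre hqlen
  have hqDne : ¬ (q.count D = q.count U + 1) := by omega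
  have hxD : x = D ∧ q.count D = q.count U := by
    rw [hplast] at hP
    cases x with
    | U => exfalso; simp [List.count_append, List.count_cons] at hP; omega
    | H => exfalso; simp [List.count_append, List.count_cons] at hP; omega
    | D => simp [List.count_append, List.count_cons] at hP; exact ⟨rfl, by omega⟩
  obtain ⟨hxD, hqbal⟩ := hxD
  have ht : t = q ++ D :: t.drop m := by
    conv_lhs => rw [← List.take_append_drop m t]
    rw [← hpdef, hplast, hxD]
    simp
  refine ⟨q, t.drop m, ht, ⟨hqbal.symm, ?_⟩, ⟨?_, ?_⟩⟩
  · intro r hr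
    exact hsmall r (hr.trans hqpre) (lt_of_le_of_lt hr.length_le hqlen)
  · -- balance of drop
    rw [ht] at hend
    simp [List.count_append, List.count_cons] at hend
    omega
  · intro r hr
    have hpre : q ++ D :: r <+: t := by
      rw [ht]
      exact (List.prefix_append_right_inj q).mpr ((List.prefix_cons_iff ..).mpr (Or.inr ⟨r, rfl, hr⟩))
    have hb := hbd _ hpre
    simp [List.count_append, List.count_cons] at hb
    omega

/-- The decomposition map: a Motzkin word of length n+1 is either H·w or U·w1·D·w2. -/
def mtoFun (n : ℕ) : (MW n ⊕ ((k : Fin n) × (MW k × MW (n - 1 - k)))) → MW (n + 1)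
  | .inl w => ⟨H :: w.1, by simp [w.2.1], motz_H w.2.2⟩
  | .inr ⟨k, w1, w2⟩ =>
    ⟨U :: (w1.1 ++ D :: w2.1), by
        have h1 := w1.2.1
        have h2 := w2.2.1
        have hk := k.2
        simp [h1, h2]
        omega,
      motz_UD w1.2.2 w2.2.2⟩

lemma mtoFun_bij (n : ℕ) : Function.Bijective (mtoFun n) := by
  constructor
  · rintro (w | ⟨k, w1, w2⟩) (w' | ⟨k', w1', w2'⟩) h <;>
      simp only [mtoFun, Subtype.mk.injEq, List.cons.injEq] at h
    · exact congrArg Sum.inl (Subtype.ext h.2)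
    · exact absurd h.1 (by simp)
    · exact absurd h.1 (by simp)
    · obtain ⟨e1, e2⟩ := uniq_UD w1.2.2 w1'.2.2 h.2
      have hk : k = k' := by
        have ha := w1.2.1
        have hb := w1'.2.1
        have hl := congrArg List.length e1
        apply Fin.ext
        omega
      subst hk
      exact congrArg Sum.inr
        (congrArg (Sigma.mk k) (Prod.ext (Subtype.ext e1) (Subtype.ext e2)))
  · rintro ⟨w, hlen, hM⟩
    match w, hlen with
    | x :: t, hlen =>
      have hlent : t.length = n := by simpa using hlen
      cases x with
      | D =>
        exfalso
        have := hM.2 [D] ⟨t, rfl⟩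
        simp at this
      | H =>
        have hMt : IsMotzkin t := by
          refine ⟨by simpa using hM.1, fun p hp => ?_⟩
          have := hM.2 (H :: p) (by simpa using hp)
          simpa using this
        exact ⟨.inl ⟨t, hlent, hMt⟩, rfl⟩
      | U =>
        have hbd : ∀ p, p <+: t → p.count D ≤ p.count U + 1 := by
          intro p hp
          have := hM.2 (U :: p) (by simpa using hp)
          simpa using this
        have hend : t.count D = t.count U + 1 := by
          have := hM.1
          simp [List.count_cons] at this
          omega
        obtain ⟨w1, w2, ht, h1, h2⟩ := decomp hbd hend
        have hlen1 : w1.length < n := by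
          have : t.length = w1.length + 1 + w2.length := by rw [ht]; simp; omega
          omega
        have hlen2 : w2.length = n - 1 - w1.length := by
          have : t.length = w1.length + 1 + w2.length := by rw [ht]; simp; omega
          omega
        exact ⟨.inr ⟨⟨w1.length, hlen1⟩, ⟨w1, rfl, h1⟩, ⟨w2, hlen2, h2⟩⟩,
          by simp [mtoFun, ht]⟩

lemma nat_card_sigma {n : ℕ} (β : Fin n → Type*) [∀ i, Finite (β i)] :
    Nat.card ((i : Fin n) × β i) = ∑ i : Fin n, Nat.card (β i) := by
  letI := fun i => Fintype.ofFinite (β i)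
  simp [Nat.card_eq_fintype_card]

lemma motzkin_rec (n : ℕ) :
    motzkinNum (n + 1) =
      motzkinNum n + ∑ k ∈ Finset.range n, motzkinNum k * motzkinNum (n - 1 - k) := by
  have hcong := Nat.card_congr (Equiv.ofBijective _ (mtoFun_bij n))
  rw [Nat.card_sum, nat_card_sigma] at hcong
  simp only [Nat.card_prod] at hcong
  rw [show motzkinNum (n+1) = Nat.card (MW (n+1)) from rfl, ← hcong]
  congr 1
  rw [Finset.sum_range fun k => motzkinNum k * motzkinNum (n - 1 - k)]
  rfl

lemma motzkin_zero : motzkinNum 0 = 1 := by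
  have : Unique (MW 0) := by
    refine ⟨⟨⟨[], rfl, by constructor <;> simp⟩⟩, ?_⟩
    rintro ⟨w, hw, _⟩
    exact Subtype.ext (List.length_eq_zero_iff.mp hw)
  exact Nat.card_unique


open PowerSeries in
theorem stmt_13 :
    (PowerSeries.mk fun n => (motzkinNum n : ℤ)) =
      1 + X * (PowerSeries.mk fun n => (motzkinNum n : ℤ))
        + X ^ 2 * (PowerSeries.mk fun n => (motzkinNum n : ℤ)) ^ 2 := by
  ext n
  simp only [map_add, PowerSeries.coeff_mk]
  match n with
  | 0 =>
    simp [motzkin_zero, PowerSeries.coeff_zero_eq_constantCoeff, pow_two, ← mul_assoc]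
  | 1 =>
    have h1 : motzkinNum 1 = motzkinNum 0 := by
      have := motzkin_rec 0
      simpa using this
    rw [show (2 : ℕ) = 1 + 1 from rfl, pow_succ, pow_one, mul_assoc]
    simp [PowerSeries.coeff_succ_X_mul, h1, motzkin_zero,
      PowerSeries.coeff_zero_eq_constantCoeff]
  | (m + 2) =>
    rw [show m + 2 = m + 1 + 1 from rfl, PowerSeries.coeff_succ_X_mul,
      show m + 1 + 1 = m + 2 from rfl, PowerSeries.coeff_X_pow_mul,
      pow_two, PowerSeries.coeff_mul]
    simp only [PowerSeries.coeff_mk, PowerSeries.coeff_one]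
    rw [Finset.Nat.sum_antidiagonal_eq_sum_range_succ_mk]
    have hrec := motzkin_rec (m + 1)
    have hsum : ∀ k ∈ Finset.range (m + 1),
        motzkinNum k * motzkinNum (m + 1 - 1 - k) = motzkinNum k * motzkinNum (m - k) := by
      intro k hk
      congr 2
    rw [Finset.sum_congr rfl hsum] at hrec
    rw [hrec]
    push_cast
    simp
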